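/- If s is an adult digit string with every run length at most 3, then every run of Z(s) has exactly length 2 and Z(Z(s)) = Z(s); that is, Z(s) is a fixed point of Z. -/

import Mathlib

/-- Run-length encoding of a digit string. -/
def rle : List ℕ → List (ℕ × ℕ)
  | [] => []
  | a :: t =>
    match rle t with
    | [] => [(a, 1)]
    | (b, n) :: r => if a = b then (b, n + 1) :: r else (a, 1) :: (b, n) :: r

/-- The "look-and-say-the-biggest" map: each maximal run of the digit `a` of length `n`
is replaced by the decimal digits of `max n a` followed by the digit `a`.
(When `n ≤ 9` this is just the two digits `max n a`, `a`.) -/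
def Z (s : List ℕ) : List ℕ :=
  ((rle s).map fun p => (Nat.digits 10 (max p.2 p.1)).reverse ++ [p.1]).flatten

/-- `r` is a run-length representation of the digit string `s`: all run lengths are
positive, consecutive base digits differ, and the expansion of `r` equals `s`. -/
def IsRLE (r : List (ℕ × ℕ)) (s : List ℕ) : Prop :=
  (∀ p ∈ r, 1 ≤ p.2) ∧ (r.map Prod.fst).Chain' (· ≠ ·) ∧
    (r.map fun p => List.replicate p.2 p.1).flatten = s

/-!
When every run `(a, n)` of `s` has `n ≤ a ≤ 9`, `Z` replaces it by the two digits `a a`.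
Adjacent runs of `s` carry different digits, so `Z s` has the same run digits as `s`, now all
of length `2`; if moreover every digit is at least `2`, these new runs again satisfy `n ≤ a ≤ 9`,
so applying `Z` once more rewrites each `a a` into `a a`.
-/

lemma rle_cons_of_rle_eq_cons {a n : ℕ} {s : List ℕ} {r : List (ℕ × ℕ)}
    (h : rle s = (a, n) :: r) : rle (a :: s) = (a, n + 1) :: r := by
  simp [rle, h]

lemma rle_cons_of_forall_head_ne {a : ℕ} {s : List ℕ} (h : ∀ p ∈ (rle s).head?, p.1 ≠ a) :
    rle (a :: s) = (a, 1) :: rle s := by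
  rw [rle]
  rcases hs : rle s with _ | ⟨⟨b, n⟩, r⟩
  · rfl
  · have hba : b ≠ a := h (b, n) (by simp [hs])
    simp [Ne.symm hba]

lemma rle_replicate_append {a n : ℕ} (hn : 1 ≤ n) {s : List ℕ} {r : List (ℕ × ℕ)}
    (hs : rle s = r) (hr : ∀ p ∈ r.head?, p.1 ≠ a) :
    rle (List.replicate n a ++ s) = (a, n) :: r := by
  induction n, hn using Nat.le_induction with
  | base => rw [List.replicate_one, List.singleton_append, rle_cons_of_forall_head_ne (hs ▸ hr), hs]
  | succ n _ ih => exact rle_cons_of_rle_eq_cons ih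

theorem IsRLE.rle_eq {r : List (ℕ × ℕ)} {s : List ℕ} (h : IsRLE r s) : rle s = r := by
  induction r generalizing s with
  | nil => obtain ⟨-, -, rfl⟩ := h; rfl
  | cons q r ih =>
    obtain ⟨hpos, hchain, rfl⟩ := h
    obtain ⟨hhead, htail⟩ := List.isChain_cons.mp hchain
    refine rle_replicate_append (hpos q List.mem_cons_self)
      (ih ⟨fun p hp => hpos p (List.mem_cons_of_mem q hp), htail, rfl⟩) fun p hp => ?_
    exact (hhead p.1 (by rw [List.head?_map]; exact Option.mem_map_of_mem _ hp)).symm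

theorem isRLE_rle (s : List ℕ) : IsRLE (rle s) s := by
  induction s with
  | nil => exact ⟨by simp [rle], List.isChain_nil, rfl⟩
  | cons a t ih =>
    obtain ⟨hpos, hchain, hflat⟩ := ih
    rcases ht : rle t with _ | ⟨⟨b, n⟩, r⟩
    · obtain rfl : t = [] := by simpa [ht] using hflat.symm
      exact ⟨by simp [rle], List.isChain_singleton _, rfl⟩
    · rw [ht] at hpos hchain hflat
      by_cases hab : a = b
      · subst hab
        rw [rle_cons_of_rle_eq_cons ht]
        refine ⟨?_, by simpa using hchain, by simpa [List.replicate_succ] using hflat⟩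
        simp only [List.mem_cons, forall_eq_or_imp] at hpos ⊢
        exact ⟨by omega, hpos.2⟩
      · rw [rle_cons_of_forall_head_ne (by simp [ht, Ne.symm hab]), ht]
        exact ⟨by simpa using hpos, List.IsChain.cons_cons hab hchain, by simpa using hflat⟩

lemma fst_mem_of_mem_rle {s : List ℕ} {p : ℕ × ℕ} (hp : p ∈ rle s) : p.1 ∈ s := by
  obtain ⟨hpos, -, hflat⟩ := isRLE_rle s
  rw [← hflat, List.mem_flatten]
  exact ⟨_, List.mem_map_of_mem hp, List.mem_replicate.2 ⟨by have := hpos p hp; omega, rfl⟩⟩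

lemma digits_max_reverse_append_eq_replicate_two {a n : ℕ} (hn : 0 < n) (hna : n ≤ a)
    (ha : a < 10) : (Nat.digits 10 (max n a)).reverse ++ [a] = List.replicate 2 a := by
  rw [max_eq_right hna, Nat.digits_of_lt 10 a (hn.trans_le hna).ne' ha]
  rfl

lemma Z_eq_of_runs_le_digit {s : List ℕ} (hs : ∀ p ∈ rle s, p.2 ≤ p.1 ∧ p.1 < 10) :
    Z s = ((rle s).map fun p => List.replicate 2 p.1).flatten := by
  rw [Z, List.map_congr_left fun p hp => digits_max_reverse_append_eq_replicate_two
    ((isRLE_rle s).1 p hp) (hs p hp).1 (hs p hp).2]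

lemma rle_Z_of_runs_le_digit {s : List ℕ} (hs : ∀ p ∈ rle s, p.2 ≤ p.1 ∧ p.1 < 10) :
    rle (Z s) = (rle s).map fun p => (p.1, 2) := by
  refine IsRLE.rle_eq ⟨fun _ hp => ?_, ?_, ?_⟩
  · obtain ⟨p, -, rfl⟩ := List.mem_map.1 hp
    exact one_le_two
  · simpa [List.map_map, Function.comp_def] using (isRLE_rle s).2.1
  · rw [Z_eq_of_runs_le_digit hs, List.map_map]
    rfl

theorem Z_Z_of_runs_le_digit {s : List ℕ} (hs : ∀ p ∈ rle s, p.2 ≤ p.1 ∧ 2 ≤ p.1 ∧ p.1 < 10) :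
    Z (Z s) = Z s := by
  have hs' : ∀ p ∈ rle s, p.2 ≤ p.1 ∧ p.1 < 10 := fun p hp => ⟨(hs p hp).1, (hs p hp).2.2⟩
  have hZs : ∀ p ∈ rle (Z s), p.2 ≤ p.1 ∧ p.1 < 10 := by
    rw [rle_Z_of_runs_le_digit hs']
    rintro _ hq
    obtain ⟨p, hp, rfl⟩ := List.mem_map.1 hq
    exact (hs p hp).2
  rw [Z_eq_of_runs_le_digit hZs, rle_Z_of_runs_le_digit hs', List.map_map,
    Z_eq_of_runs_le_digit hs']
  rfl

/-- For an adult string with run lengths ≤ 3, every run of `Z(s)` has length exactly 2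
and `Z(s)` is a fixed point of `Z`. -/
theorem Z_adult_short_runs_fixed (s : List ℕ) (hdig : ∀ d ∈ s, d ≤ 9)
    (hadult : ∀ d ∈ s, 4 ≤ d) (hrun : ∀ p ∈ rle s, p.2 ≤ 3) :
    (∀ p ∈ rle (Z s), p.2 = 2) ∧ Z (Z s) = Z s := by
  have hs : ∀ p ∈ rle s, p.2 ≤ p.1 ∧ 2 ≤ p.1 ∧ p.1 < 10 := fun p hp => by
    have := hdig _ (fst_mem_of_mem_rle hp)
    have := hadult _ (fst_mem_of_mem_rle hp)
    have := hrun p hp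
    omega
  refine ⟨fun p hp => ?_, Z_Z_of_runs_le_digit hs⟩
  rw [rle_Z_of_runs_le_digit fun p hp => ⟨(hs p hp).1, (hs p hp).2.2⟩] at hp
  obtain ⟨q, -, rfl⟩ := List.mem_map.1 hp
  rfl
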